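/- Suppose that for every z ∈ Z_s the set {x ∈ ℝ^n : Ax ≤ b and x_j = 0 for every j with z_j = 0} is nonempty. Then the optimal value of (P_k) satisfies J*_k = min_{z ∈ Z_s} sup_{α ∈ ℝ^k, β ∈ ℝ^m, β ≥ 0} L(z, α, β). Moreover, for every z* attaining this minimum there exists an optimal solution (x*, y*) of (P_k) whose set of nonzero coordinates of x* is contained in the set of coordinates where z* equals 1. -/

import Mathlib

open Matrix Finset

noncomputable def gam {n k m : ℕ} (V : Matrix (Fin n) (Fin k) ℝ) (lam : Fin k → ℝ)
    (c : Fin n → ℝ) (A : Matrix (Fin m) (Fin n) ℝ) (α : Fin k → ℝ) (β : Fin m → ℝ) :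
    Fin n → ℝ :=
  c + V.mulVec (fun i => Real.sqrt (lam i) * α i) + Aᵀ.mulVec β

noncomputable def Lfun {n k m : ℕ} (V : Matrix (Fin n) (Fin k) ℝ) (lam : Fin k → ℝ)
    (c : Fin n → ℝ) (A : Matrix (Fin m) (Fin n) ℝ) (b : Fin m → ℝ) (η : ℝ)
    (z : Fin n → ℝ) (α : Fin k → ℝ) (β : Fin m → ℝ) : ℝ :=
  -(β ⬝ᵥ b) - (1/4) * (∑ i, (α i)^2) - (η/4) * (∑ j, z j * (gam V lam c A α β j)^2)

/-- `Zs n s` : binary vectors in `{0,1}^n` with at most `s` ones. -/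
def Zs (n s : ℕ) : Set (Fin n → ℝ) :=
  {z | (∀ j, z j = 0 ∨ z j = 1) ∧ (∑ j, z j) ≤ (s : ℝ)}

set_option linter.unusedSectionVars false

section Cone

variable {ι : Type*} [Fintype ι] [DecidableEq ι]

lemma nonneg_orthant_closed : IsClosed {u : ι → ℝ | ∀ i, 0 ≤ u i} := by
  have : {u : ι → ℝ | ∀ i, 0 ≤ u i} = ⋂ i, {u | 0 ≤ u i} := by
    ext u; simp [Set.mem_iInter]
  rw [this]
  exact isClosed_iInter fun i => isClosed_le continuous_const (continuous_apply i)

variable {E : Type*} [NormedAddCommGroup E] [NormedSpace ℝ E] [FiniteDimensional ℝ E]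

lemma cone_closed_of_li (a : ι → E) (ha : LinearIndependent ℝ a) :
    IsClosed {x : E | ∃ u : ι → ℝ, (∀ i, 0 ≤ u i) ∧ x = ∑ i, u i • a i} := by
  classical
  let L : (ι → ℝ) →ₗ[ℝ] E :=
    { toFun := fun u => ∑ i, u i • a i
      map_add' := by intro u v; simp [add_smul, Finset.sum_add_distrib]
      map_smul' := by intro c u; simp [smul_smul, Finset.smul_sum] }
  have hinj : Function.Injective L := by
    rw [← LinearMap.ker_eq_bot, LinearMap.ker_eq_bot']
    intro u hu
    have h0 := Fintype.linearIndependent_iff.mp ha u hu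
    funext i; exact h0 i
  have hemb := LinearMap.isClosedEmbedding_of_injective
    ((LinearMap.ker_eq_bot (f := L)).mpr hinj)
  have hset : {x : E | ∃ u : ι → ℝ, (∀ i, 0 ≤ u i) ∧ x = ∑ i, u i • a i}
      = L '' {u : ι → ℝ | ∀ i, 0 ≤ u i} := by
    ext x
    constructor
    · rintro ⟨u, hu, rfl⟩; exact ⟨u, hu, rfl⟩
    · rintro ⟨u, hu, rfl⟩; exact ⟨u, hu, rfl⟩
  rw [hset]
  exact hemb.isClosedMap _ nonneg_orthant_closed

end Cone



section Cara
variable {ι : Type*} [Fintype ι] [DecidableEq ι]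
variable {E : Type*} [AddCommGroup E] [Module ℝ E]

lemma caratheodory_cone (a : ι → E) (s : ℕ) :
    ∀ u : ι → ℝ, (∀ i, 0 ≤ u i) → ((univ.filter fun i => u i ≠ 0).card ≤ s) →
    ∃ (T : Finset ι) (w : ι → ℝ), LinearIndependent ℝ (fun i : T => a i) ∧
      (∀ i, 0 ≤ w i) ∧ (∀ i, i ∉ T → w i = 0) ∧ ∑ i, w i • a i = ∑ i, u i • a i := by
  classical
  induction s with
  | zero =>
    intro u hu hcard
    have hu0 : ∀ i, u i = 0 := by
      intro i
      by_contra hne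
      have : i ∈ univ.filter fun i => u i ≠ 0 := by simp [hne]
      have := Finset.card_pos.mpr ⟨i, this⟩
      omega
    refine ⟨∅, u, ?_, hu, fun i _ => hu0 i, rfl⟩
    have : IsEmpty ((∅ : Finset ι) : Type _) := by
      simp [Finset.isEmpty_coe_sort]
      exact ⟨fun x => x.2⟩
    exact linearIndependent_empty_type
  | succ s ih =>
    intro u hu hcard
    set T₀ : Finset ι := univ.filter fun i => u i ≠ 0 with hT₀
    by_cases hli : LinearIndependent ℝ (fun i : T₀ => a i)
    · refine ⟨T₀, u, hli, hu, ?_, rfl⟩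
      intro i hi
      by_contra hne
      exact hi (by simp [hT₀, hne])
    · obtain ⟨g, hg0, i₀, hgi₀⟩ := Fintype.not_linearIndependent_iff.mp hli
      set w₁ : ι → ℝ := fun i => if h : i ∈ T₀ then g ⟨i, h⟩ else 0 with hw₁
      have hw₁supp : ∀ i, i ∉ T₀ → w₁ i = 0 := by
        intro i hi; simp [hw₁, hi]
      have hw₁sum : ∑ i, w₁ i • a i = 0 := by
        have h1 : ∑ i, w₁ i • a i = ∑ i ∈ T₀, w₁ i • a i := by
          refine (Finset.sum_subset (Finset.subset_univ _) ?_).symm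
          intro i _ hi; simp [hw₁supp i hi]
        have h2 : ∑ i ∈ T₀, w₁ i • a i = ∑ i ∈ T₀.attach, g i • a i := by
          rw [← Finset.sum_attach T₀ (fun i => w₁ i • a i)]
          refine Finset.sum_congr rfl ?_
          intro i _
          simp [hw₁, i.2]
        rw [h1, h2]
        simpa using hg0
      obtain ⟨w', hw'sum, hw'supp, jp, hjp⟩ :
          ∃ w' : ι → ℝ, (∑ i, w' i • a i = 0) ∧ (∀ i, i ∉ T₀ → w' i = 0) ∧ ∃ j, 0 < w' j := by
        by_cases hp : ∃ j, 0 < w₁ j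
        · exact ⟨w₁, hw₁sum, hw₁supp, hp⟩
        · push_neg at hp
          refine ⟨-w₁, ?_, fun i hi => by simp [hw₁supp i hi], i₀, ?_⟩
          · simp only [Pi.neg_apply, neg_smul]; rw [Finset.sum_neg_distrib, hw₁sum, neg_zero]
          · have : w₁ i₀ = g i₀ := by simp [hw₁, i₀.2]
            have hne : w₁ (i₀ : ι) ≠ 0 := by rw [this]; exact hgi₀
            have := hp (i₀ : ι)
            simp only [Pi.neg_apply]
            cases lt_or_eq_of_le this with
            | inl h => linarith
            | inr h => exact absurd h hne
      have hjpT₀ : (jp : ι) ∈ T₀ := by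
        by_contra hc; rw [hw'supp _ hc] at hjp; exact lt_irrefl 0 hjp
      set P : Finset ι := T₀.filter fun i => 0 < w' i with hP
      have hPne : P.Nonempty := ⟨jp, by simp [hP, hjpT₀, hjp]⟩
      obtain ⟨i₁, hi₁P, hi₁min⟩ := P.exists_min_image (fun i => u i / w' i) hPne
      have hw'i₁ : 0 < w' i₁ := (Finset.mem_filter.mp hi₁P).2
      have hi₁T₀ : i₁ ∈ T₀ := (Finset.mem_filter.mp hi₁P).1
      set t := u i₁ / w' i₁ with ht
      have ht0 : 0 ≤ t := div_nonneg (hu i₁) hw'i₁.le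
      set u' : ι → ℝ := fun i => u i - t * w' i with hu'
      have hu'nonneg : ∀ i, 0 ≤ u' i := by
        intro i
        by_cases hw : 0 < w' i
        · have hiP : i ∈ P := by
            refine Finset.mem_filter.mpr ⟨?_, hw⟩
            by_contra hc; rw [hw'supp _ hc] at hw; exact lt_irrefl 0 hw
          have := hi₁min i hiP
          have : t ≤ u i / w' i := this
          have := (div_le_div_iff_of_pos_right hw).mpr this
          simp only [hu']
          have h2 : t * w' i ≤ u i := by
            rw [ht] at *
            calc u i₁ / w' i₁ * w' i ≤ u i / w' i * w' i := by
                  exact mul_le_mul_of_nonneg_right (hi₁min i hiP) hw.le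
            _ = u i := div_mul_cancel₀ _ (ne_of_gt hw)
          linarith
        · push_neg at hw
          have : t * w' i ≤ 0 := mul_nonpos_of_nonneg_of_nonpos ht0 hw
          have := hu i
          simp only [hu']; linarith
      have hu'i₁ : u' i₁ = 0 := by
        simp only [hu', ht]
        field_simp
        ring
      have hsupp : (univ.filter fun i => u' i ≠ 0) ⊆ T₀.erase i₁ := by
        intro i hi
        simp only [Finset.mem_filter, Finset.mem_univ, true_and] at hi
        refine Finset.mem_erase.mpr ⟨?_, ?_⟩
        · intro h; rw [h] at hi; exact hi hu'i₁
        · by_contra hc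
          have h1 : u i = 0 := by
            by_contra hne; exact hc (by simp [hT₀, hne])
          have h2 : w' i = 0 := hw'supp _ hc
          exact hi (by simp [hu', h1, h2])
      have hcard' : (univ.filter fun i => u' i ≠ 0).card ≤ s := by
        have h1 := Finset.card_le_card hsupp
        have h2 : (T₀.erase i₁).card = T₀.card - 1 := Finset.card_erase_of_mem hi₁T₀
        omega
      obtain ⟨T, w, hTli, hw, hwsupp, hwsum⟩ := ih u' hu'nonneg hcard'
      refine ⟨T, w, hTli, hw, hwsupp, ?_⟩
      rw [hwsum]
      have : ∑ i, u' i • a i = ∑ i, u i • a i - t • ∑ i, w' i • a i := by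
        rw [Finset.smul_sum, ← Finset.sum_sub_distrib]
        refine Finset.sum_congr rfl ?_
        intro i _
        simp [hu', sub_smul, smul_smul]
      rw [this, hw'sum, smul_zero, sub_zero]

end Cara



section Farkas
variable {ι : Type*} [Fintype ι] [DecidableEq ι]
variable {E : Type*} [NormedAddCommGroup E] [NormedSpace ℝ E] [FiniteDimensional ℝ E]


lemma fg_cone_closed (a : ι → E) :
    IsClosed {x : E | ∃ u : ι → ℝ, (∀ i, 0 ≤ u i) ∧ x = ∑ i, u i • a i} := by
  classical
  have hset : {x : E | ∃ u : ι → ℝ, (∀ i, 0 ≤ u i) ∧ x = ∑ i, u i • a i}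
      = ⋃ (T : Finset ι) (_ : LinearIndependent ℝ (fun i : T => a i)),
          {x : E | ∃ u : T → ℝ, (∀ i, 0 ≤ u i) ∧ x = ∑ i, u i • a (i : ι)} := by
    ext x
    simp only [Set.mem_iUnion, Set.mem_setOf_eq]
    constructor
    · rintro ⟨u, hu, rfl⟩
      obtain ⟨T, w, hTli, hw, hwsupp, hwsum⟩ :=
        caratheodory_cone a (Fintype.card ι) u hu (Finset.card_le_univ _)
      refine ⟨T, hTli, fun i => w i, fun i => hw i, ?_⟩
      rw [← hwsum]
      show ∑ i : ι, w i • a i = ∑ i : T, w (i : ι) • a (i : ι)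
      rw [Finset.sum_coe_sort T (fun i => w i • a i)]
      refine (Finset.sum_subset (Finset.subset_univ T) ?_).symm
      intro i _ hi; simp [hwsupp i hi]
    · rintro ⟨T, hTli, u, hu, rfl⟩
      refine ⟨fun i => if h : i ∈ T then u ⟨i, h⟩ else 0, ?_, ?_⟩
      · intro i
        by_cases h : i ∈ T
        · simp [h, hu ⟨i, h⟩]
        · simp [h]
      · have h1 : ∑ i : ι, (fun i => if h : i ∈ T then u ⟨i, h⟩ else (0:ℝ)) i • a i
            = ∑ i ∈ T, (if h : i ∈ T then u ⟨i, h⟩ else (0:ℝ)) • a i := by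
          refine (Finset.sum_subset (Finset.subset_univ T) ?_).symm
          intro i _ hi; simp [hi]
        rw [h1, ← Finset.sum_coe_sort T (fun i => (if h : i ∈ T then u ⟨i, h⟩ else (0:ℝ)) • a i)]
        refine Finset.sum_congr rfl fun i _ => ?_
        simp [i.2]
  rw [hset]
  refine isClosed_iUnion_of_finite fun T => ?_
  rw [Set.iUnion_eq_if]
  split_ifs with h
  · exact cone_closed_of_li (fun i : T => a i) h
  · exact isClosed_empty

open scoped InnerProductSpace in
lemma farkas_pre {n : ℕ} (a : ι → EuclideanSpace ℝ (Fin n)) (g : EuclideanSpace ℝ (Fin n))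
    (h : ∀ d : EuclideanSpace ℝ (Fin n), (∀ i, ⟪a i, d⟫_ℝ ≤ 0) → ⟪g, d⟫_ℝ ≤ 0) :
    ∃ u : ι → ℝ, (∀ i, 0 ≤ u i) ∧ g = ∑ i, u i • a i := by
  classical
  by_contra hng
  set C : Set (EuclideanSpace ℝ (Fin n)) :=
    {x | ∃ u : ι → ℝ, (∀ i, 0 ≤ u i) ∧ x = ∑ i, u i • a i} with hC
  have hgC : g ∉ C := hng
  let K : ConvexCone ℝ (EuclideanSpace ℝ (Fin n)) :=
    { carrier := C
      smul_mem' := by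
        rintro t ht x ⟨u, hu, rfl⟩
        exact ⟨fun i => t * u i, fun i => mul_nonneg ht.le (hu i), by
          rw [Finset.smul_sum]; exact Finset.sum_congr rfl fun i _ => smul_smul t (u i) (a i)⟩
      add_mem' := by
        rintro x ⟨u, hu, rfl⟩ y ⟨w, hw, rfl⟩
        exact ⟨fun i => u i + w i, fun i => add_nonneg (hu i) (hw i), by
          rw [← Finset.sum_add_distrib]
          exact Finset.sum_congr rfl fun i _ => (add_smul (u i) (w i) (a i)).symm⟩ }
  have h0K : (0 : EuclideanSpace ℝ (Fin n)) ∈ C := ⟨fun _ => 0, fun _ => le_rfl, by simp⟩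
  have hne : (K : Set (EuclideanSpace ℝ (Fin n))).Nonempty := ⟨0, h0K⟩
  have hcl : IsClosed (K : Set (EuclideanSpace ℝ (Fin n))) := fg_cone_closed a
  obtain ⟨y, hy1, hy2⟩ : ∃ y, (∀ x ∈ K, 0 ≤ ⟪x, y⟫_ℝ) ∧ ⟪y, g⟫_ℝ < 0 := by
    obtain ⟨P, hP⟩ : ∃ P : ProperCone ℝ (EuclideanSpace ℝ (Fin n)),
        (P : ConvexCone ℝ (EuclideanSpace ℝ (Fin n))) = K := CanLift.prf K ⟨hne, hcl⟩
    have hPK : ∀ x, x ∈ P ↔ x ∈ K := fun x => by rw [← hP]; rfl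
    obtain ⟨y, h1, h2⟩ := P.hyperplane_separation' (fun h => hgC ((hPK g).1 h))
    exact ⟨y, fun x hx => h1 x ((hPK x).2 hx), by rw [real_inner_comm]; exact h2⟩
  have hmem : ∀ i, a i ∈ K := by
    intro i
    refine ⟨fun j => if j = i then 1 else 0, fun j => by positivity, ?_⟩
    rw [show (∑ j, (if j = i then (1:ℝ) else 0) • a j) = ∑ j, (if j = i then a j else 0) from
      Finset.sum_congr rfl fun j _ => by split_ifs <;> simp]
    simp
  have hd : ∀ i, ⟪a i, -y⟫_ℝ ≤ 0 := by
    intro i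
    rw [inner_neg_right]
    linarith [hy1 (a i) (hmem i)]
  have := h (-y) hd
  rw [inner_neg_right] at this
  rw [real_inner_comm] at hy2
  linarith

lemma farkas {n : ℕ} (a : ι → (Fin n → ℝ)) (g : Fin n → ℝ)
    (h : ∀ d : Fin n → ℝ, (∀ i, a i ⬝ᵥ d ≤ 0) → g ⬝ᵥ d ≤ 0) :
    ∃ u : ι → ℝ, (∀ i, 0 ≤ u i) ∧ g = ∑ i, u i • a i := by
  classical
  let e : (Fin n → ℝ) ≃ₗ[ℝ] EuclideanSpace ℝ (Fin n) :=
    (WithLp.linearEquiv 2 ℝ (Fin n → ℝ)).symm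
  have hinner : ∀ p q : Fin n → ℝ, inner ℝ (e p) (e q) = p ⬝ᵥ q := by
    intro p q
    simp [PiLp.inner_apply, RCLike.inner_apply, dotProduct, e,
      WithLp.coe_symm_linearEquiv, mul_comm]
  have hyp : ∀ d : EuclideanSpace ℝ (Fin n), (∀ i, inner ℝ (e (a i)) d ≤ (0:ℝ)) →
      inner ℝ (e g) d ≤ (0:ℝ) := by
    intro d hd
    have h1 : g ⬝ᵥ e.symm d ≤ 0 := by
      refine h (e.symm d) ?_
      intro i
      have h2 : inner ℝ (e (a i)) (e (e.symm d)) = a i ⬝ᵥ e.symm d := hinner (a i) (e.symm d)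
      rw [e.apply_symm_apply] at h2
      rw [← h2]; exact hd i
    have h2 : inner ℝ (e g) (e (e.symm d)) = g ⬝ᵥ e.symm d := hinner g (e.symm d)
    rw [e.apply_symm_apply] at h2
    rw [h2]; exact h1
  obtain ⟨u, hu, hsum⟩ := farkas_pre (fun i => e (a i)) (e g) hyp
  refine ⟨u, hu, ?_⟩
  apply e.injective
  rw [hsum, map_sum]
  exact Finset.sum_congr rfl fun i _ => (e.map_smul (u i) (a i)).symm

end Farkas



lemma exists_min_coercive {n : ℕ} (K : Set (Fin n → ℝ)) (hK : IsClosed K) (hne : K.Nonempty)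
    (f : (Fin n → ℝ) → ℝ) (hf : Continuous f)
    (hcoer : ∀ M : ℝ, ∃ R : ℝ, ∀ x : Fin n → ℝ, R ≤ ‖x‖ → M ≤ f x) :
    ∃ x ∈ K, ∀ y ∈ K, f x ≤ f y := by
  obtain ⟨x₀, hx₀⟩ := hne
  obtain ⟨R, hR⟩ := hcoer (f x₀ + 1)
  set R' := max R ‖x₀‖ with hR'
  set K' := K ∩ Metric.closedBall 0 R' with hK'
  have hcomp : IsCompact K' := (isCompact_closedBall (0 : Fin n → ℝ) R').inter_left hK
  have hne' : K'.Nonempty := by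
    refine ⟨x₀, hx₀, ?_⟩
    simp only [Metric.mem_closedBall, dist_zero_right]
    exact le_max_right _ _
  obtain ⟨x, hxK', hmin⟩ := hcomp.exists_isMinOn hne' hf.continuousOn
  refine ⟨x, hxK'.1, ?_⟩
  intro y hy
  by_cases hyb : ‖y‖ ≤ R'
  · exact hmin ⟨hy, by simpa [Metric.mem_closedBall, dist_zero_right] using hyb⟩
  · push_neg at hyb
    have h1 : f x ≤ f x₀ := hmin ⟨hx₀, by
      simp only [Metric.mem_closedBall, dist_zero_right]
      exact le_max_right _ _⟩
    have h2 : f x₀ + 1 ≤ f y := hR y (le_trans (le_max_left _ _) hyb.le)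
    linarith

lemma exists_min_f {n k : ℕ} (c : Fin n → ℝ) (lam : Fin k → ℝ) (col : Fin k → (Fin n → ℝ))
    (η : ℝ) (hη : 0 < η) (hlam : ∀ i, 0 ≤ lam i)
    (K : Set (Fin n → ℝ)) (hK : IsClosed K) (hne : K.Nonempty) :
    ∃ x ∈ K, ∀ y ∈ K,
      (c ⬝ᵥ x + ∑ i, lam i * (col i ⬝ᵥ x)^2 + η⁻¹ * ∑ j, (x j)^2)
        ≤ (c ⬝ᵥ y + ∑ i, lam i * (col i ⬝ᵥ y)^2 + η⁻¹ * ∑ j, (y j)^2) := by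
  have hdc : ∀ w : Fin n → ℝ, Continuous fun x : Fin n → ℝ => w ⬝ᵥ x := by
    intro w
    unfold dotProduct
    exact continuous_finset_sum _ fun j _ => continuous_const.mul (continuous_apply j)
  set f : (Fin n → ℝ) → ℝ :=
    fun x => c ⬝ᵥ x + ∑ i, lam i * (col i ⬝ᵥ x)^2 + η⁻¹ * ∑ j, (x j)^2 with hf'
  have hf : Continuous f := by
    refine Continuous.add (Continuous.add (hdc c) ?_) ?_
    · exact continuous_finset_sum _ fun i _ => continuous_const.mul ((hdc (col i)).pow 2)
    · exact continuous_const.mul (continuous_finset_sum _ fun j _ => (continuous_apply j).pow 2)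
  set C : ℝ := (η/2) * ∑ j, (c j)^2 with hC
  have hlow : ∀ x : Fin n → ℝ, (1/(2*η)) * ‖x‖^2 - C ≤ f x := by
    intro x
    have h1 : ‖x‖ ≤ Real.sqrt (∑ j, (x j)^2) := by
      rw [pi_norm_le_iff_of_nonneg (Real.sqrt_nonneg _)]
      intro j
      rw [Real.norm_eq_abs, ← Real.sqrt_sq_eq_abs]
      apply Real.sqrt_le_sqrt
      exact Finset.single_le_sum (f := fun j => (x j)^2) (fun i _ => sq_nonneg _) (mem_univ j)
    have h2 : ‖x‖^2 ≤ ∑ j, (x j)^2 := by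
      have := pow_le_pow_left₀ (norm_nonneg x) h1 2
      rwa [Real.sq_sqrt (Finset.sum_nonneg fun j _ => sq_nonneg _)] at this
    have h3 : 0 ≤ ∑ i, lam i * (col i ⬝ᵥ x)^2 :=
      Finset.sum_nonneg fun i _ => mul_nonneg (hlam i) (sq_nonneg _)
    have h4 : -(1/(2*η)) * (∑ j, (x j)^2) - C ≤ c ⬝ᵥ x := by
      have : ∀ j, -((1/(2*η)) * (x j)^2 + (η/2) * (c j)^2) ≤ c j * x j := by
        intro j
        have h5 : 0 ≤ (1/(2*η)) * (x j + η * c j)^2 := by positivity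
        have h6 : (1/(2*η)) * (x j + η * c j)^2
            = (1/(2*η)) * (x j)^2 + c j * x j + (η/2) * (c j)^2 := by
          field_simp
          ring
        nlinarith
      calc -(1/(2*η)) * (∑ j, (x j)^2) - C
          = ∑ j, (-((1/(2*η)) * (x j)^2 + (η/2) * (c j)^2)) := by
            rw [hC, Finset.sum_neg_distrib, Finset.sum_add_distrib,
              ← Finset.mul_sum, ← Finset.mul_sum]
            ring
        _ ≤ ∑ j, c j * x j := Finset.sum_le_sum fun j _ => this j
        _ = c ⬝ᵥ x := rfl
    have h7 : (1/(2*η)) * (∑ j, (x j)^2) ≤ η⁻¹ * (∑ j, (x j)^2) - (1/(2*η)) * (∑ j, (x j)^2) := by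
      have : η⁻¹ * (∑ j, (x j)^2) - (1/(2*η)) * (∑ j, (x j)^2) = (1/(2*η)) * (∑ j, (x j)^2) := by
        field_simp; ring
      linarith [this]
    have h8 : (1/(2*η)) * ‖x‖^2 ≤ (1/(2*η)) * (∑ j, (x j)^2) := by
      apply mul_le_mul_of_nonneg_left h2; positivity
    simp only [hf']
    nlinarith
  apply exists_min_coercive K hK hne f hf
  intro M
  refine ⟨Real.sqrt (max 0 (2*η*(M + C))), ?_⟩
  intro x hx
  have h1 : max 0 (2*η*(M + C)) ≤ ‖x‖^2 := by
    have := pow_le_pow_left₀ (Real.sqrt_nonneg _) hx 2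
    rwa [Real.sq_sqrt (le_max_left _ _)] at this
  have h2 : 2*η*(M + C) ≤ ‖x‖^2 := le_trans (le_max_right _ _) h1
  have h3 := hlow x
  have h4 : (1/(2*η)) * (2*η*(M+C)) ≤ (1/(2*η)) * ‖x‖^2 := by
    apply mul_le_mul_of_nonneg_left h2; positivity
  have h5 : (1/(2*η)) * (2*η*(M+C)) = M + C := by field_simp
  rw [h5] at h4
  have h6 : M ≤ 1 / (2 * η) * ‖x‖ ^ 2 - C := by linarith
  exact le_trans h6 h3



lemma weak_dual {n k m : ℕ} (V : Matrix (Fin n) (Fin k) ℝ) (lam : Fin k → ℝ)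
    (c : Fin n → ℝ) (A : Matrix (Fin m) (Fin n) ℝ) (b : Fin m → ℝ) (η : ℝ) (hη : 0 < η)
    (hlam : ∀ i, 0 ≤ lam i)
    (z : Fin n → ℝ) (hz : ∀ j, z j = 0 ∨ z j = 1)
    (x : Fin n → ℝ) (y : Fin k → ℝ)
    (hxA : ∀ i, A.mulVec x i ≤ b i) (hxz : ∀ j, z j = 0 → x j = 0)
    (hy : ∀ i, Real.sqrt (lam i) * y i = Real.sqrt (lam i) * ((fun j => V j i) ⬝ᵥ x))
    (α : Fin k → ℝ) (β : Fin m → ℝ) (hβ : ∀ i, 0 ≤ β i) :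
    Lfun V lam c A b η z α β ≤ c ⬝ᵥ x + (∑ i, lam i * (y i)^2) + η⁻¹ * (∑ j, (x j)^2) := by
  classical
  set γ : Fin n → ℝ := gam V lam c A α β with hγ
  have hLf : Lfun V lam c A b η z α β
      = -(β ⬝ᵥ b) - (1/4) * (∑ i, (α i)^2) - (η/4) * (∑ j, z j * (γ j)^2) := by
    unfold Lfun; rw [← hγ]
  have hgdx : x ⬝ᵥ γ = c ⬝ᵥ x + (∑ i, Real.sqrt (lam i) * y i * α i) + β ⬝ᵥ A.mulVec x := by
    rw [hγ]
    unfold gam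
    rw [dotProduct_add, dotProduct_add]
    congr 1
    · congr 1
      · exact dotProduct_comm x c
      · rw [dotProduct_mulVec]
        unfold dotProduct
        refine Finset.sum_congr rfl ?_
        intro i _
        have h1 : x ᵥ* V = fun i => ∑ j, x j * V j i := rfl
        have h2 : (fun j => V j i) ⬝ᵥ x = ∑ j, x j * V j i := by
          unfold dotProduct
          exact Finset.sum_congr rfl fun j _ => mul_comm _ _
        calc (x ᵥ* V) i * (Real.sqrt (lam i) * α i)
            = Real.sqrt (lam i) * ((fun j => V j i) ⬝ᵥ x) * α i := by
              rw [h1, h2]; ring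
          _ = Real.sqrt (lam i) * y i * α i := by rw [← hy i]
    · rw [dotProduct_mulVec, vecMul_transpose, dotProduct_comm]
  set S1 : ℝ := ∑ i, β i * (b i - A.mulVec x i) with hS1
  set S2 : ℝ := ∑ i, (Real.sqrt (lam i) * y i - α i / 2)^2 with hS2
  set S3 : ℝ := ∑ j, (η⁻¹ * (x j)^2 + x j * γ j + (η/4) * z j * (γ j)^2) with hS3
  have h1 : 0 ≤ S1 :=
    Finset.sum_nonneg fun i _ => mul_nonneg (hβ i) (sub_nonneg.mpr (hxA i))
  have h2 : 0 ≤ S2 := Finset.sum_nonneg fun i _ => sq_nonneg _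
  have h3 : 0 ≤ S3 := by
    refine Finset.sum_nonneg fun j _ => ?_
    rcases hz j with h | h
    · rw [h, hxz j h]; norm_num
    · rw [h]
      have hkey : η⁻¹ * ((x j + η/2 * γ j)^2)
          = η⁻¹ * (x j)^2 + x j * γ j + (η/4) * 1 * (γ j)^2 := by
        field_simp
        ring
      rw [← hkey]
      positivity
  have e1 : S1 = β ⬝ᵥ b - β ⬝ᵥ A.mulVec x := by
    rw [hS1]
    unfold dotProduct
    rw [← Finset.sum_sub_distrib]
    exact Finset.sum_congr rfl fun i _ => by ring
  have e2 : S2 = (∑ i, lam i * (y i)^2) - (∑ i, Real.sqrt (lam i) * y i * α i)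
      + (1/4) * (∑ i, (α i)^2) := by
    rw [hS2]
    have : ∀ i : Fin k, (Real.sqrt (lam i) * y i - α i / 2)^2
        = lam i * (y i)^2 - Real.sqrt (lam i) * y i * α i + (1/4) * (α i)^2 := by
      intro i
      set t := Real.sqrt (lam i) with ht
      have hsq : t^2 = lam i := Real.sq_sqrt (hlam i)
      rw [← hsq]
      ring
    rw [Finset.sum_congr rfl fun i _ => this i]
    rw [Finset.sum_add_distrib, Finset.sum_sub_distrib, ← Finset.mul_sum]
  have e3 : S3 = η⁻¹ * (∑ j, (x j)^2) + x ⬝ᵥ γ + (η/4) * (∑ j, z j * (γ j)^2) := by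
    rw [hS3]
    have hterm : ∀ j : Fin n, η⁻¹ * (x j)^2 + x j * γ j + (η/4) * z j * (γ j)^2
        = η⁻¹ * (x j)^2 + x j * γ j + (η/4) * (z j * (γ j)^2) := fun j => by ring
    rw [Finset.sum_congr rfl fun j _ => hterm j, Finset.sum_add_distrib,
      Finset.sum_add_distrib, ← Finset.mul_sum, ← Finset.mul_sum]
    rfl
  linarith [h1, h2, h3, e1, e2, e3, hgdx, hLf]



lemma strong_dual {n k m : ℕ} (V : Matrix (Fin n) (Fin k) ℝ) (lam : Fin k → ℝ)
    (c : Fin n → ℝ) (A : Matrix (Fin m) (Fin n) ℝ) (b : Fin m → ℝ) (η : ℝ) (hη : 0 < η)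
    (hlam : ∀ i, 0 ≤ lam i)
    (z : Fin n → ℝ) (hz : ∀ j, z j = 0 ∨ z j = 1)
    (x : Fin n → ℝ)
    (hxA : ∀ i, A.mulVec x i ≤ b i) (hxz : ∀ j, z j = 0 → x j = 0)
    (hmin : ∀ x', (∀ i, A.mulVec x' i ≤ b i) → (∀ j, z j = 0 → x' j = 0) →
      c ⬝ᵥ x + (∑ i, lam i * ((fun j => V j i) ⬝ᵥ x)^2) + η⁻¹ * (∑ j, (x j)^2)
        ≤ c ⬝ᵥ x' + (∑ i, lam i * ((fun j => V j i) ⬝ᵥ x')^2) + η⁻¹ * (∑ j, (x' j)^2)) :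
    ∃ α β, (∀ i, (0:ℝ) ≤ β i) ∧ Lfun V lam c A b η z α β
      = c ⬝ᵥ x + (∑ i, lam i * ((fun j => V j i) ⬝ᵥ x)^2) + η⁻¹ * (∑ j, (x j)^2) := by
  classical
  set col : Fin k → Fin n → ℝ := fun i j => V j i with hcol
  set y : Fin k → ℝ := fun i => col i ⬝ᵥ x with hy
  set grad : Fin n → ℝ :=
    fun j => c j + 2 * (∑ i, lam i * y i * V j i) + 2 * η⁻¹ * x j with hgrad
  -- expansion of grad dotted with a direction
  have hgd : ∀ d : Fin n → ℝ, grad ⬝ᵥ d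
      = c ⬝ᵥ d + 2 * (∑ i, lam i * y i * (col i ⬝ᵥ d)) + 2 * η⁻¹ * (∑ j, x j * d j) := by
    intro d
    have h1 : grad ⬝ᵥ d = ∑ j, (c j * d j + (∑ i, 2 * (lam i * y i * (V j i * d j)))
        + 2 * η⁻¹ * (x j * d j)) := by
      refine Finset.sum_congr rfl fun j _ => ?_
      have h2 : 2 * (∑ i, lam i * y i * V j i) * d j
          = ∑ i, 2 * (lam i * y i * (V j i * d j)) := by
        rw [Finset.mul_sum, Finset.sum_mul]
        exact Finset.sum_congr rfl fun i _ => by ring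
      calc grad j * d j
          = c j * d j + 2 * (∑ i, lam i * y i * V j i) * d j + 2 * η⁻¹ * (x j * d j) := by
            rw [hgrad]; ring
        _ = _ := by rw [h2]
    rw [h1, Finset.sum_add_distrib, Finset.sum_add_distrib]
    have hA : (∑ j, c j * d j) = c ⬝ᵥ d := rfl
    have hB : (∑ j, ∑ i, 2 * (lam i * y i * (V j i * d j)))
        = 2 * (∑ i, lam i * y i * (col i ⬝ᵥ d)) := by
      rw [Finset.sum_comm, Finset.mul_sum]
      refine Finset.sum_congr rfl fun i _ => ?_
      have h3 : (2:ℝ) * (lam i * y i * (col i ⬝ᵥ d))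
          = 2 * (lam i * y i * (∑ j, V j i * d j)) := rfl
      rw [h3, Finset.mul_sum, Finset.mul_sum]
    have hC : (∑ j, 2 * η⁻¹ * (x j * d j)) = 2 * η⁻¹ * (∑ j, x j * d j) :=
      (Finset.mul_sum _ _ _).symm
    rw [hA, hB, hC]
  -- the objective
  set fv : (Fin n → ℝ) → ℝ :=
    fun w => c ⬝ᵥ w + (∑ i, lam i * (col i ⬝ᵥ w)^2) + η⁻¹ * (∑ j, (w j)^2) with hfv
  have hminf : ∀ x', (∀ i, A.mulVec x' i ≤ b i) → (∀ j, z j = 0 → x' j = 0) →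
      fv x ≤ fv x' := hmin
  -- quadratic expansion
  have hexp : ∀ (t : ℝ) (d : Fin n → ℝ), fv (x + t • d)
      = fv x + t * (grad ⬝ᵥ d)
        + t^2 * ((∑ i, lam i * (col i ⬝ᵥ d)^2) + η⁻¹ * (∑ j, (d j)^2)) := by
    intro t d
    have ha : c ⬝ᵥ (x + t • d) = c ⬝ᵥ x + t * (c ⬝ᵥ d) := by
      rw [dotProduct_add, dotProduct_smul]; rfl
    have hb : (∑ i, lam i * (col i ⬝ᵥ (x + t • d))^2)
        = (∑ i, lam i * (col i ⬝ᵥ x)^2) + (t*2) * (∑ i, lam i * y i * (col i ⬝ᵥ d))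
          + t^2 * (∑ i, lam i * (col i ⬝ᵥ d)^2) := by
      have hterm : ∀ i : Fin k, lam i * (col i ⬝ᵥ (x + t • d))^2
          = lam i * (col i ⬝ᵥ x)^2 + (t*2) * (lam i * y i * (col i ⬝ᵥ d))
            + t^2 * (lam i * (col i ⬝ᵥ d)^2) := by
        intro i
        have hcol2 : col i ⬝ᵥ (x + t • d) = col i ⬝ᵥ x + t * (col i ⬝ᵥ d) := by
          rw [dotProduct_add, dotProduct_smul]; rfl
        have hyi : y i = col i ⬝ᵥ x := rfl
        rw [hcol2, hyi]
        ring
      rw [Finset.sum_congr rfl fun i _ => hterm i, Finset.sum_add_distrib,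
        Finset.sum_add_distrib, ← Finset.mul_sum, ← Finset.mul_sum]
    have hc2 : (∑ j, ((x + t • d) j)^2)
        = (∑ j, (x j)^2) + (t*2) * (∑ j, x j * d j) + t^2 * (∑ j, (d j)^2) := by
      have hterm : ∀ j : Fin n, ((x + t • d) j)^2
          = (x j)^2 + (t*2) * (x j * d j) + t^2 * (d j)^2 := by
        intro j
        have : (x + t • d) j = x j + t * d j := rfl
        rw [this]; ring
      rw [Finset.sum_congr rfl fun j _ => hterm j, Finset.sum_add_distrib,
        Finset.sum_add_distrib, ← Finset.mul_sum, ← Finset.mul_sum]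
    rw [hfv]
    simp only []
    rw [ha, hb, hc2, hgd d]
    ring
  -- nonnegativity of the quadratic form
  have hQ : ∀ d : Fin n → ℝ, 0 ≤ (∑ i, lam i * (col i ⬝ᵥ d)^2) + η⁻¹ * (∑ j, (d j)^2) := by
    intro d
    have h1 : 0 ≤ ∑ i, lam i * (col i ⬝ᵥ d)^2 :=
      Finset.sum_nonneg fun i _ => mul_nonneg (hlam i) (sq_nonneg _)
    have h2 : 0 ≤ η⁻¹ * (∑ j, (d j)^2) :=
      mul_nonneg (by positivity) (Finset.sum_nonneg fun j _ => sq_nonneg _)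
    linarith
  -- Farkas hypothesis
  set a : (Fin m ⊕ (Fin n ⊕ Fin n)) → (Fin n → ℝ) :=
    Sum.elim (fun i => if A.mulVec x i = b i then A i else 0)
      (Sum.elim (fun j0 => if z j0 = 0 then (Pi.single j0 1) else 0)
                (fun j0 => if z j0 = 0 then (-Pi.single j0 1) else 0)) with ha
  have hfh : ∀ d : Fin n → ℝ, (∀ i, a i ⬝ᵥ d ≤ 0) → (-grad) ⬝ᵥ d ≤ 0 := by
    intro d hd
    have hact : ∀ i, A.mulVec x i = b i → A i ⬝ᵥ d ≤ 0 := by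
      intro i hi
      have := hd (Sum.inl i)
      rwa [ha, Sum.elim_inl, if_pos hi] at this
    have hdz : ∀ j0, z j0 = 0 → d j0 = 0 := by
      intro j0 hj0
      have h1 := hd (Sum.inr (Sum.inl j0))
      have h2 := hd (Sum.inr (Sum.inr j0))
      rw [ha, Sum.elim_inr, Sum.elim_inl, if_pos hj0] at h1
      rw [ha, Sum.elim_inr, Sum.elim_inr, if_pos hj0] at h2
      rw [single_dotProduct, one_mul] at h1
      rw [neg_dotProduct, single_dotProduct, one_mul] at h2
      linarith
    rw [neg_dotProduct, neg_nonpos]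
    -- show 0 ≤ grad ⬝ᵥ d using minimality along feasible directions
    -- construct t₀ > 0 such that x + t • d is feasible for 0 < t ≤ t₀
    set F : Fin m → ℝ := fun i =>
      if A.mulVec x i < b i ∧ 0 < A i ⬝ᵥ d then (b i - A.mulVec x i)/(A i ⬝ᵥ d) else 1 with hF
    set s : Finset ℝ := insert (1:ℝ) (Finset.image F Finset.univ) with hs
    have hsne : s.Nonempty := ⟨1, Finset.mem_insert_self _ _⟩
    set t₀ : ℝ := s.min' hsne with ht₀
    have hsmem : ∀ w ∈ s, (0:ℝ) < w := by
      intro w hw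
      rcases Finset.mem_insert.mp hw with h | h
      · rw [h]; norm_num
      · obtain ⟨i, -, rfl⟩ := Finset.mem_image.mp h
        simp only [hF]
        split_ifs with hcond
        · exact div_pos (by linarith [hcond.1]) hcond.2
        · norm_num
    have ht₀pos : 0 < t₀ := hsmem t₀ (s.min'_mem hsne)
    have ht₀le : ∀ i : Fin m, A.mulVec x i < b i → 0 < A i ⬝ᵥ d →
        t₀ ≤ (b i - A.mulVec x i)/(A i ⬝ᵥ d) := by
      intro i h1 h2
      have hFi : F i = (b i - A.mulVec x i)/(A i ⬝ᵥ d) := by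
        simp only [hF]
        rw [if_pos (And.intro h1 h2)]
      have hmem : F i ∈ s :=
        Finset.mem_insert_of_mem (Finset.mem_image_of_mem F (Finset.mem_univ i))
      exact le_trans (Finset.min'_le s (F i) hmem) (le_of_eq hFi)
    have hfeas : ∀ t : ℝ, 0 < t → t ≤ t₀ →
        (∀ i, A.mulVec (x + t • d) i ≤ b i) ∧ (∀ j, z j = 0 → (x + t • d) j = 0) := by
      intro t ht1 ht2
      constructor
      · intro i
        have hAv : A.mulVec (x + t • d) i = A.mulVec x i + t * (A i ⬝ᵥ d) := by
          rw [Matrix.mulVec_add, Matrix.mulVec_smul]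
          rfl
        rw [hAv]
        by_cases hcase : 0 < A i ⬝ᵥ d
        · by_cases hact2 : A.mulVec x i = b i
          · have := hact i hact2
            linarith
          · have hlt : A.mulVec x i < b i := lt_of_le_of_ne (hxA i) hact2
            have h5 := ht₀le i hlt hcase
            have h6 : t ≤ (b i - A.mulVec x i)/(A i ⬝ᵥ d) := le_trans ht2 h5
            have h7 : t * (A i ⬝ᵥ d) ≤ b i - A.mulVec x i := by
              rw [← le_div_iff₀ hcase]; exact h6
            linarith
        · push_neg at hcase
          have : t * (A i ⬝ᵥ d) ≤ 0 := mul_nonpos_of_nonneg_of_nonpos ht1.le hcase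
          linarith [hxA i]
      · intro j hj
        have : (x + t • d) j = x j + t * d j := rfl
        rw [this, hxz j hj, hdz j hj]
        ring
    by_contra hneg
    push_neg at hneg
    set G := grad ⬝ᵥ d with hG
    set Qd := (∑ i, lam i * (col i ⬝ᵥ d)^2) + η⁻¹ * (∑ j, (d j)^2) with hQd
    have hQd0 : 0 ≤ Qd := hQ d
    set t : ℝ := min t₀ (-G / (Qd + 1)) with htdef
    have htpos : 0 < t := by
      rw [htdef]
      apply lt_min ht₀pos
      apply div_pos (by linarith) (by linarith)
    have htle : t ≤ t₀ := min_le_left _ _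
    have htle2 : t ≤ -G / (Qd + 1) := min_le_right _ _
    clear_value G Qd t
    obtain ⟨hf1, hf2⟩ := hfeas t htpos htle
    have hge := hminf (x + t • d) hf1 hf2
    rw [hexp t d] at hge
    rw [← hQd, ← hG] at hge
    have h8 : 0 ≤ t * G + t^2 * Qd := by linarith
    have h9 : t * Qd ≤ -G / (Qd + 1) * Qd := mul_le_mul_of_nonneg_right htle2 hQd0
    have h10 : -G / (Qd + 1) * Qd < -G := by
      rw [div_mul_eq_mul_div, div_lt_iff₀ (by linarith : (0:ℝ) < Qd + 1)]
      nlinarith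
    have h12 : G + t * Qd < 0 := by linarith
    have h13 : 0 < t * -(G + t * Qd) := mul_pos htpos (neg_pos.mpr h12)
    have h14 : t * -(G + t * Qd) = -(t * G + t^2 * Qd) := by ring
    linarith
  obtain ⟨u, hu, husum⟩ := farkas a (-grad) hfh
  -- define β
  set β : Fin m → ℝ := fun i => if A.mulVec x i = b i then u (Sum.inl i) else 0 with hβ
  have hβ0 : ∀ i, 0 ≤ β i := by
    intro i
    simp only [hβ]
    split_ifs
    · exact hu _
    · exact le_refl 0
  have hCS : ∀ i, β i * (b i - A.mulVec x i) = 0 := by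
    intro i
    simp only [hβ]
    split_ifs with h
    · rw [h]; ring
    · ring
  -- KKT stationarity on the support
  have hKKT : ∀ j, z j = 1 → grad j + Aᵀ.mulVec β j = 0 := by
    intro j hzj
    have hzj0 : z j ≠ 0 := by rw [hzj]; norm_num
    have h1 : (-grad) j = ∑ i : Fin m ⊕ (Fin n ⊕ Fin n), u i * a i j := by
      rw [husum]
      rw [Finset.sum_apply]
      exact Finset.sum_congr rfl fun i _ => rfl
    rw [Fintype.sum_sum_type] at h1
    have h2 : ∀ i : Fin m, u (Sum.inl i) * a (Sum.inl i) j = β i * A i j := by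
      intro i
      simp only [ha, hβ, Sum.elim_inl]
      split_ifs with h
      · rfl
      · simp
    have h3 : ∀ i : Fin n ⊕ Fin n, u (Sum.inr i) * a (Sum.inr i) j = 0 := by
      intro i
      rcases i with j0 | j0
      · simp only [ha, Sum.elim_inr, Sum.elim_inl]
        split_ifs with h
        · have hne : j0 ≠ j := fun hc => hzj0 (hc ▸ h)
          rw [Pi.single_eq_of_ne' hne]
          ring
        · simp
      · simp only [ha, Sum.elim_inr, Sum.elim_inr]
        split_ifs with h
        · have hne : j0 ≠ j := fun hc => hzj0 (hc ▸ h)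
          rw [Pi.neg_apply, Pi.single_eq_of_ne' hne]
          ring
        · simp
    have h4 : ∑ i : Fin n ⊕ Fin n, u (Sum.inr i) * a (Sum.inr i) j = 0 :=
      Finset.sum_eq_zero fun i _ => h3 i
    rw [Finset.sum_congr rfl fun i _ => h2 i, h4, add_zero] at h1
    have h5 : Aᵀ.mulVec β j = ∑ i, β i * A i j := by
      show (fun i => Aᵀ j i) ⬝ᵥ β = _
      unfold dotProduct
      refine Finset.sum_congr rfl fun i _ => ?_
      show Aᵀ j i * β i = β i * A i j
      rw [Matrix.transpose_apply]
      ring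
    have h6 : (-grad) j = -(grad j) := rfl
    rw [h6] at h1
    rw [h5]
    linear_combination (-1 : ℝ) * h1
  -- now define α and verify the value of the Lagrangian
  set α : Fin k → ℝ := fun i => 2 * Real.sqrt (lam i) * y i with hα
  refine ⟨α, β, hβ0, ?_⟩
  set γ : Fin n → ℝ := gam V lam c A α β with hγ
  have hγj : ∀ j, γ j = grad j + Aᵀ.mulVec β j - 2 * η⁻¹ * x j := by
    intro j
    rw [hγ]
    unfold gam
    have h1 : (c + V.mulVec (fun i => Real.sqrt (lam i) * α i) + Aᵀ.mulVec β) j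
        = c j + (∑ i, V j i * (Real.sqrt (lam i) * α i)) + Aᵀ.mulVec β j := rfl
    rw [h1, hgrad]
    have h2 : ∀ i : Fin k, V j i * (Real.sqrt (lam i) * α i)
        = 2 * (lam i * y i * V j i) := by
      intro i
      rw [hα]
      have h3 : Real.sqrt (lam i) * (2 * Real.sqrt (lam i) * y i)
          = 2 * (Real.sqrt (lam i) * Real.sqrt (lam i)) * y i := by ring
      rw [h3, Real.mul_self_sqrt (hlam i)]
      ring
    rw [Finset.sum_congr rfl fun i _ => h2 i]
    rw [show (∑ i, 2 * (lam i * y i * V j i)) = 2 * ∑ i, lam i * y i * V j i from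
      (Finset.mul_sum _ _ _).symm]
    ring
  have hγs : ∀ j, z j = 1 → γ j = -(2 * η⁻¹ * x j) := by
    intro j hzj
    rw [hγj j]
    have h15 := hKKT j hzj
    linear_combination h15
  -- compute each piece of the Lagrangian
  have hp1 : β ⬝ᵥ b = β ⬝ᵥ A.mulVec x := by
    refine Finset.sum_congr rfl fun i _ => ?_
    linear_combination hCS i
  have hp2 : (1/4) * (∑ i, (α i)^2) = ∑ i, lam i * (y i)^2 := by
    rw [Finset.mul_sum]
    refine Finset.sum_congr rfl fun i _ => ?_
    rw [hα]
    have h3 : (2 * Real.sqrt (lam i) * y i)^2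
        = 4 * (Real.sqrt (lam i) * Real.sqrt (lam i)) * (y i)^2 := by ring
    rw [h3, Real.mul_self_sqrt (hlam i)]
    ring
  have hp3 : (η/4) * (∑ j, z j * (γ j)^2) = η⁻¹ * (∑ j, (x j)^2) := by
    rw [Finset.mul_sum, Finset.mul_sum]
    refine Finset.sum_congr rfl fun j _ => ?_
    rcases hz j with h | h
    · rw [h, hxz j h]
      ring
    · rw [h, hγs j h]
      have hne : η ≠ 0 := ne_of_gt hη
      field_simp
      ring
  have hp4 : c ⬝ᵥ x = -(β ⬝ᵥ A.mulVec x) - 2 * (∑ i, lam i * (y i)^2) - 2 * η⁻¹ * (∑ j, (x j)^2) := by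
    have hzero : ∀ j, (grad j + Aᵀ.mulVec β j) * x j = 0 := by
      intro j
      rcases hz j with h | h
      · rw [hxz j h]; ring
      · rw [hKKT j h]; ring
    have hsum0 : ∑ j, (grad j + Aᵀ.mulVec β j) * x j = 0 :=
      Finset.sum_eq_zero fun j _ => hzero j
    have hsplit : ∑ j, (grad j + Aᵀ.mulVec β j) * x j
        = grad ⬝ᵥ x + (Aᵀ.mulVec β) ⬝ᵥ x := by
      have hh : ∀ j : Fin n, (grad j + Aᵀ.mulVec β j) * x j
          = grad j * x j + (Aᵀ.mulVec β j) * x j := fun j => by ring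
      rw [Finset.sum_congr rfl fun j _ => hh j, Finset.sum_add_distrib]
      rfl
    have hAT : (Aᵀ.mulVec β) ⬝ᵥ x = β ⬝ᵥ A.mulVec x := by
      rw [dotProduct_comm, dotProduct_mulVec, vecMul_transpose, dotProduct_comm]
    have hgx : grad ⬝ᵥ x = c ⬝ᵥ x + 2 * (∑ i, lam i * (y i)^2) + 2 * η⁻¹ * (∑ j, (x j)^2) := by
      rw [hgd x]
      have h1 : ∀ i : Fin k, lam i * y i * (col i ⬝ᵥ x) = lam i * (y i)^2 := by
        intro i
        have : col i ⬝ᵥ x = y i := rfl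
        rw [this]; ring
      rw [Finset.sum_congr rfl fun i _ => h1 i]
      have h2 : ∀ j : Fin n, x j * x j = (x j)^2 := fun j => by ring
      rw [Finset.sum_congr rfl fun j _ => h2 j]
    rw [hsplit, hAT, hgx] at hsum0
    linarith
  have hLf : Lfun V lam c A b η z α β
      = -(β ⬝ᵥ b) - (1/4) * (∑ i, (α i)^2) - (η/4) * (∑ j, z j * (γ j)^2) := by
    unfold Lfun
    rw [← hγ]
  have hfveq : c ⬝ᵥ x + (∑ i, lam i * ((fun j => V j i) ⬝ᵥ x)^2) + η⁻¹ * (∑ j, (x j)^2)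
      = c ⬝ᵥ x + (∑ i, lam i * (y i)^2) + η⁻¹ * (∑ j, (x j)^2) := by
    have : ∀ i : Fin k, ((fun j => V j i) ⬝ᵥ x) = y i := fun i => rfl
    rw [Finset.sum_congr rfl fun i _ => by rw [this i]]
  rw [hfveq, hLf, hp1, hp2, hp3, hp4]
  ring



/-- min-max characterization of the optimal value of `(P_k)`. -/

theorem stmt0
    (n k m s : ℕ) (hn : 1 ≤ n) (hk1 : 1 ≤ k) (hkn : k ≤ n) (hs : s ≤ n)
    (Q : Matrix (Fin n) (Fin n) ℝ) (hQ : Q.PosSemidef)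
    (lamFull : Fin n → ℝ) (v : Fin n → (Fin n → ℝ))
    (hlam_nonneg : ∀ i, 0 ≤ lamFull i)
    (hlam_sorted : ∀ i j : Fin n, i ≤ j → lamFull j ≤ lamFull i)
    (heig : ∀ i, Q.mulVec (v i) = lamFull i • v i)
    (hortho : ∀ i j, v i ⬝ᵥ v j = if i = j then (1:ℝ) else 0)
    (c : Fin n → ℝ) (A : Matrix (Fin m) (Fin n) ℝ) (b : Fin m → ℝ)
    (η : ℝ) (hη : 0 < η)
    (V : Matrix (Fin n) (Fin k) ℝ)
    (hV : ∀ (j : Fin n) (i : Fin k), V j i = v (Fin.castLE hkn i) j)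
    (lam : Fin k → ℝ) (hlamk : ∀ i, lam i = lamFull (Fin.castLE hkn i))
    -- feasibility and objective of problem (P_k)
    (feas : (Fin n → ℝ) → (Fin k → ℝ) → Prop)
    (hfeas : ∀ x y, feas x y ↔
      (∀ i, A.mulVec x i ≤ b i) ∧
      ((Finset.univ.filter (fun j => x j ≠ 0)).card ≤ s) ∧
      (∀ i : Fin k, Real.sqrt (lam i) * y i = Real.sqrt (lam i) * ((fun j => V j i) ⬝ᵥ x)))
    (obj : (Fin n → ℝ) → (Fin k → ℝ) → ℝ)
    (hobj : ∀ x y, obj x y = c ⬝ᵥ x + (∑ i, lam i * (y i)^2) + η⁻¹ * (∑ j, (x j)^2))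
    (Jk : ℝ) (hJk : Jk = sInf {w | ∃ x y, feas x y ∧ w = obj x y})
    -- for every z ∈ Z_s the set {x : Ax ≤ b, x_j = 0 whenever z_j = 0} is nonempty
    (hfeasible : ∀ z ∈ Zs n s, ∃ x : Fin n → ℝ,
      (∀ i, A.mulVec x i ≤ b i) ∧ (∀ j, z j = 0 → x j = 0)) :
    IsLeast {w | ∃ z ∈ Zs n s,
        w = sSup {u | ∃ α β, (∀ i, (0:ℝ) ≤ β i) ∧ u = Lfun V lam c A b η z α β}} Jk
    ∧ ∀ z ∈ Zs n s,
        sSup {u | ∃ α β, (∀ i, (0:ℝ) ≤ β i) ∧ u = Lfun V lam c A b η z α β} = Jk →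
        ∃ x y, feas x y ∧ obj x y = Jk ∧ ∀ j, x j ≠ 0 → z j = 1 := by
  classical
  have hlamk0 : ∀ i, 0 ≤ lam i := fun i => by rw [hlamk i]; exact hlam_nonneg _
  set fv : (Fin n → ℝ) → ℝ := fun x =>
    c ⬝ᵥ x + (∑ i, lam i * ((fun j => V j i) ⬝ᵥ x)^2) + η⁻¹ * (∑ j, (x j)^2) with hfv
  -- minimizers for each z ∈ Zs
  have hminEx : ∀ z : Fin n → ℝ, z ∈ Zs n s →
      ∃ x, ((∀ i, A.mulVec x i ≤ b i) ∧ (∀ j, z j = 0 → x j = 0)) ∧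
        ∀ x', (∀ i, A.mulVec x' i ≤ b i) → (∀ j, z j = 0 → x' j = 0) → fv x ≤ fv x' := by
    intro z hzZ
    set K : Set (Fin n → ℝ) :=
      {x | (∀ i, A.mulVec x i ≤ b i) ∧ (∀ j, z j = 0 → x j = 0)} with hK
    have hKcl : IsClosed K := by
      have h1 : K = (⋂ i, {x : Fin n → ℝ | A.mulVec x i ≤ b i}) ∩
          (⋂ j ∈ {j : Fin n | z j = 0}, {x : Fin n → ℝ | x j = 0}) := by
        ext x
        simp only [hK, Set.mem_setOf_eq, Set.mem_inter_iff, Set.mem_iInter]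
        try tauto
      rw [h1]
      refine IsClosed.inter (isClosed_iInter fun i => ?_) (isClosed_biInter fun j _ => ?_)
      · have hcont : Continuous fun x : Fin n → ℝ => A.mulVec x i := by
          show Continuous fun x : Fin n → ℝ => ∑ j, A i j * x j
          exact continuous_finset_sum _ fun j _ => continuous_const.mul (continuous_apply j)
        exact isClosed_le hcont continuous_const
      · exact isClosed_eq (continuous_apply j) continuous_const
    have hKne : K.Nonempty := by
      obtain ⟨x, hx1, hx2⟩ := hfeasible z hzZ
      exact ⟨x, hx1, hx2⟩
    obtain ⟨x, hxK, hxmin⟩ :=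
      exists_min_f c lam (fun i j => V j i) η hη hlamk0 K hKcl hKne
    exact ⟨x, hxK, fun x' h1 h2 => hxmin x' ⟨h1, h2⟩⟩
  choose xm hxm1 hxm3 using hminEx
  have hxmA : ∀ z hz, ∀ i, A.mulVec (xm z hz) i ≤ b i := fun z hz => (hxm1 z hz).1
  have hxmz : ∀ z hz, ∀ j, z j = 0 → xm z hz j = 0 := fun z hz => (hxm1 z hz).2
  -- the dual optimum equals the restricted primal minimum
  have hDz : ∀ z (hz : z ∈ Zs n s),
      sSup {u | ∃ α β, (∀ i, (0:ℝ) ≤ β i) ∧ u = Lfun V lam c A b η z α β}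
        = fv (xm z hz) := by
    intro z hz
    have hz01 := hz.1
    refine IsGreatest.csSup_eq ⟨?_, ?_⟩
    · obtain ⟨α, β, hβ, heq⟩ := strong_dual V lam c A b η hη hlamk0 z hz01
        (xm z hz) (hxmA z hz) (hxmz z hz) (hxm3 z hz)
      exact ⟨α, β, hβ, heq.symm⟩
    · rintro u ⟨α, β, hβ, rfl⟩
      exact weak_dual V lam c A b η hη hlamk0 z hz01 (xm z hz)
        (fun i => (fun j => V j i) ⬝ᵥ (xm z hz)) (hxmA z hz) (hxmz z hz)
        (fun i => rfl) α β hβ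
  -- obj equals fv on feasible points
  have hobjf : ∀ x y, feas x y → obj x y = fv x := by
    intro x y hxy
    obtain ⟨h1, h2, h3⟩ := (hfeas x y).mp hxy
    rw [hobj]
    have : ∀ i : Fin k, lam i * (y i)^2 = lam i * ((fun j => V j i) ⬝ᵥ x)^2 := by
      intro i
      rcases eq_or_lt_of_le (hlamk0 i) with h | h
      · rw [← h]; ring
      · have hsq : Real.sqrt (lam i) ≠ 0 := ne_of_gt (Real.sqrt_pos.mpr h)
        have := mul_left_cancel₀ hsq (h3 i)
        rw [this]
    rw [Finset.sum_congr rfl fun i _ => this i]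
  -- the feasibility of the minimizers in the original problem
  have hcard : ∀ z (hz : z ∈ Zs n s),
      ((univ.filter fun j => xm z hz j ≠ 0).card ≤ s) := by
    intro z hz
    have hsub : (univ.filter fun j => xm z hz j ≠ 0) ⊆ (univ.filter fun j => z j = 1) := by
      intro j hj
      simp only [Finset.mem_filter, Finset.mem_univ, true_and] at *
      rcases hz.1 j with h | h
      · exact absurd (hxmz z hz j h) hj
      · exact h
    have h1 : ((univ.filter fun j => z j = 1).card : ℝ) ≤ (s : ℝ) := by
      have h2 : ((univ.filter fun j => z j = 1).card : ℝ)
          = ∑ j ∈ univ.filter (fun j => z j = 1), z j := by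
        rw [Finset.sum_congr rfl (fun j hj => (Finset.mem_filter.mp hj).2)]
        simp
      have h3 : ∑ j ∈ univ.filter (fun j => z j = 1), z j ≤ ∑ j, z j := by
        refine Finset.sum_le_sum_of_subset_of_nonneg (Finset.filter_subset _ _) ?_
        intro j _ _
        rcases hz.1 j with h | h
        · rw [h]
        · rw [h]; norm_num
      calc ((univ.filter fun j => z j = 1).card : ℝ) = _ := h2
        _ ≤ ∑ j, z j := h3
        _ ≤ (s : ℝ) := hz.2
    have h4 : (univ.filter fun j => z j = 1).card ≤ s := by exact_mod_cast h1
    exact le_trans (Finset.card_le_card hsub) h4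
  have hfeasm : ∀ z (hz : z ∈ Zs n s),
      feas (xm z hz) (fun i => (fun j => V j i) ⬝ᵥ (xm z hz)) := by
    intro z hz
    rw [hfeas]
    exact ⟨hxmA z hz, hcard z hz, fun i => rfl⟩
  have hobjm : ∀ z (hz : z ∈ Zs n s),
      obj (xm z hz) (fun i => (fun j => V j i) ⬝ᵥ (xm z hz)) = fv (xm z hz) :=
    fun z hz => hobjf _ _ (hfeasm z hz)
  -- primal value set
  set P : Set ℝ := {w | ∃ x y, feas x y ∧ w = obj x y} with hP
  have hPne : P.Nonempty := by
    have hz0 : (fun _ : Fin n => (0:ℝ)) ∈ Zs n s := by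
      constructor
      · intro j; left; rfl
      · simp
    obtain ⟨x0, hx01, hx02⟩ := hfeasible _ hz0
    have hx0 : ∀ j, x0 j = 0 := fun j => hx02 j rfl
    refine ⟨obj x0 (fun i => (fun j => V j i) ⬝ᵥ x0), x0, _, ?_, rfl⟩
    rw [hfeas]
    refine ⟨hx01, ?_, fun i => rfl⟩
    have : (univ.filter fun j => x0 j ≠ 0) = ∅ := by
      refine Finset.filter_eq_empty_iff.mpr ?_
      intro j _
      simp [hx0 j]
    rw [this]
    simp
  have hPlb : ∀ w ∈ P, -(η/4) * (∑ j, (c j)^2) ≤ w := by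
    rintro w ⟨x, y, hxy, rfl⟩
    rw [hobjf x y hxy, hfv]
    have h1 : 0 ≤ ∑ i, lam i * ((fun j => V j i) ⬝ᵥ x)^2 :=
      Finset.sum_nonneg fun i _ => mul_nonneg (hlamk0 i) (sq_nonneg _)
    have h2 : ∀ j : Fin n, -((η/4) * (c j)^2) ≤ c j * x j + η⁻¹ * (x j)^2 := by
      intro j
      have h3 : 0 ≤ η⁻¹ * (x j + (η/2) * c j)^2 := by positivity
      have h4 : η⁻¹ * (x j + (η/2) * c j)^2
          = η⁻¹ * (x j)^2 + c j * x j + (η/4) * (c j)^2 := by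
        field_simp
        ring
      nlinarith
    have h5 : -(η/4) * (∑ j, (c j)^2) ≤ ∑ j, (c j * x j + η⁻¹ * (x j)^2) := by
      have h6 : -(η/4) * (∑ j, (c j)^2) = ∑ j, -((η/4) * (c j)^2) := by
        rw [Finset.sum_neg_distrib, ← Finset.mul_sum]
        ring
      rw [h6]
      exact Finset.sum_le_sum fun j _ => h2 j
    have h7 : ∑ j, (c j * x j + η⁻¹ * (x j)^2)
        = c ⬝ᵥ x + η⁻¹ * (∑ j, (x j)^2) := by
      rw [Finset.sum_add_distrib, ← Finset.mul_sum]
      rfl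
    simp only []
    linarith [h5, h7 ▸ h5]
  have hPbdd : BddBelow P := ⟨-(η/4) * (∑ j, (c j)^2), hPlb⟩
  -- Claim A : Jk ≤ fv (xm z hz) for every z
  have hA : ∀ z (hz : z ∈ Zs n s), Jk ≤ fv (xm z hz) := by
    intro z hz
    rw [hJk]
    refine csInf_le hPbdd ?_
    exact ⟨xm z hz, fun i => (fun j => V j i) ⬝ᵥ (xm z hz), hfeasm z hz, (hobjm z hz).symm⟩
  -- Claim B : there is a z* with fv (xm z* _) ≤ Jk
  set zT : Finset (Fin n) → (Fin n → ℝ) := fun T => fun j => if j ∈ T then 1 else 0 with hzT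
  have hzTZs : ∀ T : Finset (Fin n), T.card ≤ s → zT T ∈ Zs n s := by
    intro T hT
    constructor
    · intro j
      simp only [hzT]
      split_ifs
      · right; rfl
      · left; rfl
    · have h1 : ∑ j, zT T j = (T.card : ℝ) := by
        simp only [hzT]
        rw [Finset.sum_ite_mem, Finset.univ_inter, Finset.sum_const]
        simp
      rw [h1]
      exact_mod_cast hT
  set g : Finset (Fin n) → ℝ := fun T =>
    if h : T.card ≤ s then fv (xm (zT T) (hzTZs T h)) else 0 with hg
  set TS : Finset (Finset (Fin n)) := univ.filter (fun T => T.card ≤ s) with hTS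
  have hTSne : TS.Nonempty := by
    refine ⟨∅, ?_⟩
    simp [hTS]
  obtain ⟨Tstar, hTstarMem, hTstarMin⟩ := Finset.exists_min_image TS g hTSne
  have hTstarCard : Tstar.card ≤ s := (Finset.mem_filter.mp hTstarMem).2
  have hzstarZs : zT Tstar ∈ Zs n s := hzTZs Tstar hTstarCard
  have hgstar : g Tstar = fv (xm (zT Tstar) hzstarZs) := by
    simp only [hg]
    rw [dif_pos hTstarCard]
  -- g Tstar is a lower bound of P
  have hglb : ∀ w ∈ P, g Tstar ≤ w := by
    rintro w ⟨x, y, hxy, rfl⟩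
    obtain ⟨h1, h2, h3⟩ := (hfeas x y).mp hxy
    set Tx : Finset (Fin n) := univ.filter (fun j => x j ≠ 0) with hTx
    have hTxcard : Tx.card ≤ s := h2
    have hTxmem : Tx ∈ TS := by
      simp only [hTS, Finset.mem_filter, Finset.mem_univ, true_and]
      exact hTxcard
    have hxK : ∀ j, zT Tx j = 0 → x j = 0 := by
      intro j hj
      by_contra hne
      have : j ∈ Tx := by
        simp only [hTx, Finset.mem_filter, Finset.mem_univ, true_and]
        exact hne
      simp only [hzT, if_pos this] at hj
      norm_num at hj
    have hfleq : fv (xm (zT Tx) (hzTZs Tx hTxcard)) ≤ fv x :=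
      hxm3 (zT Tx) (hzTZs Tx hTxcard) x h1 hxK
    have hgTx : g Tx = fv (xm (zT Tx) (hzTZs Tx hTxcard)) := by
      simp only [hg]
      rw [dif_pos hTxcard]
    calc g Tstar ≤ g Tx := hTstarMin Tx hTxmem
      _ = fv (xm (zT Tx) (hzTZs Tx hTxcard)) := hgTx
      _ ≤ fv x := hfleq
      _ = obj x y := (hobjf x y hxy).symm
  have hB : fv (xm (zT Tstar) hzstarZs) ≤ Jk := by
    rw [hJk, ← hgstar]
    exact le_csInf hPne hglb
  have hJkeq : Jk = fv (xm (zT Tstar) hzstarZs) :=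
    le_antisymm (hA _ hzstarZs) hB
  constructor
  · constructor
    · exact ⟨zT Tstar, hzstarZs, by rw [hDz (zT Tstar) hzstarZs, ← hJkeq]⟩
    · rintro w ⟨z, hz, rfl⟩
      rw [hDz z hz]
      exact hA z hz
  · intro z hz hsup
    have hfveq : fv (xm z hz) = Jk := by rw [← hDz z hz, hsup]
    refine ⟨xm z hz, fun i => (fun j => V j i) ⬝ᵥ (xm z hz), hfeasm z hz, ?_, ?_⟩
    · rw [hobjm z hz, hfveq]
    · intro j hj
      rcases hz.1 j with h | h
      · exact absurd (hxmz z hz j h) hj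
      · exact h
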